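/- (Lemma 2.5(ii)) Under the setup of Lemma 2.5 (z₁ a type-2 approximation with precision ε of the minimizer of z ↦ g(z) + (1/(2τ))‖z − (z₀ − D⁻¹u)‖²_D, and z₂ a type-1 approximation with precision ε of the minimizer of z ↦ g(z) + (1/(2τ))‖z − (z₀ − D⁻¹v)‖²_D), for every z ∈ ℝ^d one has g(z₁) − g(z) + ⟨z₁ − z, (1/τ)v⟩ ≤ (1/(2τ))(‖z − z₀‖²_D − ‖z − z₂‖²_D) + (1/(2τ))(‖D⁻¹(u − v)‖²_D − ‖z₀ − z₁‖²_D) + 2ε + √(2ε/τ)·‖z − z₂‖_D. -/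

import Mathlib

/-!
Evaluating the type-2 inequality for `z₁` at `x = z₂` and adding a quadratic-growth bound for
the type-1 point `z₂` gives the claim up to an identity in the `D`-geometry and one
Cauchy–Schwarz step. The growth bound comes from strong convexity: comparing the objective at
`z₂` with its value at `z₂ + t (z - z₂)` gives growth `(1 - t)/(2τ) ‖z - z₂‖²_D - ε / t` for
every `t ∈ (0, 1]`, and the best `t` turns the loss `ε / t` into `√(2ε/τ) ‖z - z₂‖_D + ε`.
-/

open Matrix

/-- squared M-norm: ⟨x, M x⟩ -/
noncomputable def sqnorm {d : ℕ} (M : Matrix (Fin d) (Fin d) ℝ) (x : Fin d → ℝ) : ℝ :=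
  x ⬝ᵥ M.mulVec x

/-- M-norm: √⟨x, M x⟩ -/
noncomputable def mnorm {d : ℕ} (M : Matrix (Fin d) (Fin d) ℝ) (x : Fin d → ℝ) : ℝ :=
  Real.sqrt (x ⬝ᵥ M.mulVec x)

lemma exists_mem_Ioc_sq_div_sub_le {τ ε s : ℝ} (hτ : 0 < τ) (hε : 0 < ε) (hs : 0 ≤ s) :
    ∃ t ∈ Set.Ioc (0 : ℝ) 1,
      s ^ 2 / (2 * τ) - √(2 * ε / τ) * s - ε ≤ (1 - t) / (2 * τ) * s ^ 2 - ε / t := by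
  set k := √(2 * ε / τ)
  have hk : 0 < k := Real.sqrt_pos.mpr (by positivity)
  -- `t = τ k / s` maximises the right-hand side over `t > 0`; if it exceeds `1`, take `t = 1`.
  rcases le_or_gt s (τ * k) with hsk | hsk
  · refine ⟨1, ⟨one_pos, le_rfl⟩, ?_⟩
    have h : s ^ 2 / (2 * τ) ≤ k * s := by
      rw [div_le_iff₀ (by positivity)]
      nlinarith
    simp only [sub_self, zero_div, zero_mul, div_one]
    linarith
  · have hs_pos : 0 < s := (mul_pos hτ hk).trans hsk
    refine ⟨τ * k / s, ⟨by positivity, (div_le_one hs_pos).mpr hsk.le⟩, ?_⟩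
    have hε_eq : ε = τ * k ^ 2 / 2 := by
      rw [Real.sq_sqrt (by positivity)]
      field_simp
    rw [hε_eq]
    field_simp
    nlinarith [sq_nonneg (τ * k)]

lemma Matrix.IsSymm.dotProduct_mulVec_comm {n R : Type*} [Fintype n] [CommSemiring R]
    {A : Matrix n n R} (hA : A.IsSymm) (a b : n → R) : a ⬝ᵥ A *ᵥ b = b ⬝ᵥ A *ᵥ a := by
  simpa [hA.eq] using dotProduct_transpose_mulVec A a b

lemma Matrix.PosSemidef.isSymm {n : Type*} [Fintype n] {A : Matrix n n ℝ} (hA : A.PosSemidef) :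
    A.IsSymm :=
  isHermitian_iff_isSymm.mp hA.isHermitian

section SqNorm

variable {d : ℕ} {D : Matrix (Fin d) (Fin d) ℝ}

lemma sqnorm_nonneg (hD : D.PosSemidef) (x : Fin d → ℝ) : 0 ≤ sqnorm D x := by
  simpa [sqnorm] using hD.dotProduct_mulVec_nonneg x

lemma mnorm_nonneg (x : Fin d → ℝ) : 0 ≤ mnorm D x :=
  Real.sqrt_nonneg _

lemma mnorm_sq (hD : D.PosSemidef) (x : Fin d → ℝ) : mnorm D x ^ 2 = sqnorm D x :=
  Real.sq_sqrt (sqnorm_nonneg hD x)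

lemma sqnorm_smul_add_smul_sub (hD : D.IsSymm) (a b w : Fin d → ℝ) (t : ℝ) :
    sqnorm D ((1 - t) • a + t • b - w)
      = (1 - t) * sqnorm D (a - w) + t * sqnorm D (b - w) - t * (1 - t) * sqnorm D (b - a) := by
  simp only [sqnorm, mulVec_sub, mulVec_add, mulVec_smul, dotProduct_sub, dotProduct_add,
    dotProduct_smul, sub_dotProduct, add_dotProduct, smul_dotProduct, smul_eq_mul,
    hD.dotProduct_mulVec_comm]
  ring

lemma two_mul_dotProduct_mulVec_le_sqnorm_add_sqnorm (hD : D.PosSemidef) (a b : Fin d → ℝ) :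
    2 * (a ⬝ᵥ D *ᵥ b) ≤ sqnorm D a + sqnorm D b := by
  have h := sqnorm_nonneg hD (a - b)
  simp only [sqnorm, mulVec_sub, dotProduct_sub, sub_dotProduct,
    hD.isSymm.dotProduct_mulVec_comm] at h ⊢
  linarith

lemma sqnorm_descent_estimate (hD : D.PosSemidef) (z z₀ z₁ z₂ p q : Fin d → ℝ) :
    2 * ((z₁ - z) ⬝ᵥ D *ᵥ q) - 2 * ((z₂ - z₁) ⬝ᵥ D *ᵥ (z₀ - p - z₁))
        + sqnorm D (z - (z₀ - q)) - sqnorm D (z₂ - (z₀ - q))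
      ≤ sqnorm D (z - z₀) + sqnorm D (p - q) - sqnorm D (z₀ - z₁) := by
  calc 2 * ((z₁ - z) ⬝ᵥ D *ᵥ q) - 2 * ((z₂ - z₁) ⬝ᵥ D *ᵥ (z₀ - p - z₁))
        + sqnorm D (z - (z₀ - q)) - sqnorm D (z₂ - (z₀ - q))
      = sqnorm D (z - z₀) - sqnorm D (z₀ - z₁)
        + (2 * ((z₂ - z₁) ⬝ᵥ D *ᵥ (p - q)) - sqnorm D (z₂ - z₁)) := by
        simp only [sqnorm, mulVec_sub, dotProduct_sub, sub_dotProduct,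
          hD.isSymm.dotProduct_mulVec_comm]
        ring
    _ ≤ sqnorm D (z - z₀) - sqnorm D (z₀ - z₁) + sqnorm D (p - q) := by
        linarith [two_mul_dotProduct_mulVec_le_sqnorm_add_sqnorm hD (z₂ - z₁) (p - q)]
    _ = sqnorm D (z - z₀) + sqnorm D (p - q) - sqnorm D (z₀ - z₁) := by ring

noncomputable def proxObjective (g : (Fin d → ℝ) → ℝ) (D : Matrix (Fin d) (Fin d) ℝ) (τ : ℝ)
    (w x : Fin d → ℝ) : ℝ :=
  g x + 1 / (2 * τ) * sqnorm D (x - w)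

variable {g : (Fin d → ℝ) → ℝ} {τ ε : ℝ} {w z₂ : Fin d → ℝ}

lemma proxObjective_smul_add_smul_le (hg : ConvexOn ℝ Set.univ g) (hD : D.IsSymm)
    (a b : Fin d → ℝ) {t : ℝ} (ht₀ : 0 ≤ t) (ht₁ : t ≤ 1) :
    proxObjective g D τ w ((1 - t) • a + t • b)
      ≤ (1 - t) * proxObjective g D τ w a + t * proxObjective g D τ w b
        - t * (1 - t) / (2 * τ) * sqnorm D (b - a) := by
  have hg_ab := hg.2 (Set.mem_univ a) (Set.mem_univ b) (sub_nonneg.2 ht₁) ht₀ (by ring)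
  simp only [smul_eq_mul] at hg_ab
  simp only [proxObjective, sqnorm_smul_add_smul_sub hD]
  linear_combination hg_ab

lemma proxObjective_quadratic_growth_of_mem_Ioc (hg : ConvexOn ℝ Set.univ g) (hD : D.IsSymm)
    (hmin : ∀ x, proxObjective g D τ w x ≥ proxObjective g D τ w z₂ - ε)
    (z : Fin d → ℝ) {t : ℝ} (ht : t ∈ Set.Ioc 0 1) :
    proxObjective g D τ w z₂ + (1 - t) / (2 * τ) * sqnorm D (z - z₂) - ε / t
      ≤ proxObjective g D τ w z := by
  have h_seg := proxObjective_smul_add_smul_le (τ := τ) (w := w) hg hD z₂ z ht.1.le ht.2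
  have h_min := hmin ((1 - t) • z₂ + t • z)
  refine le_of_mul_le_mul_left ?_ ht.1
  rw [mul_sub, mul_add, mul_div_cancel₀ _ ht.1.ne']
  linear_combination h_min + h_seg

lemma proxObjective_quadratic_growth (hD : D.PosSemidef) (hτ : 0 < τ) (hε : 0 < ε)
    (hg : ConvexOn ℝ Set.univ g)
    (hmin : ∀ x, proxObjective g D τ w x ≥ proxObjective g D τ w z₂ - ε) (z : Fin d → ℝ) :
    proxObjective g D τ w z₂ + 1 / (2 * τ) * sqnorm D (z - z₂)
        - √(2 * ε / τ) * mnorm D (z - z₂) - ε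
      ≤ proxObjective g D τ w z := by
  obtain ⟨t, ht, h_opt⟩ :=
    exists_mem_Ioc_sq_div_sub_le hτ hε (mnorm_nonneg (D := D) (z - z₂))
  have h_growth := proxObjective_quadratic_growth_of_mem_Ioc hg hD.isSymm hmin z ht
  rw [mnorm_sq hD] at h_opt
  linear_combination h_opt + h_growth

end SqNorm

/-- Lemma 2.5(ii). -/
theorem key_descent_ineq {d : ℕ}
    (D : Matrix (Fin d) (Fin d) ℝ) (hD : D.PosDef)
    (τ : ℝ) (hτ : 0 < τ) (ε : ℝ) (hε : 0 < ε)
    (g : (Fin d → ℝ) → ℝ) (hconv : ConvexOn ℝ Set.univ g)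
    (z₀ u v z₁ z₂ : Fin d → ℝ)
    (h1 : ∀ x, g x ≥ g z₁ +
        ((1 / τ) • D.mulVec (z₀ - D⁻¹.mulVec u - z₁)) ⬝ᵥ (x - z₁) - ε)
    (h2 : ∀ x, g x + (1 / (2 * τ)) * sqnorm D (x - (z₀ - D⁻¹.mulVec v))
        ≥ g z₂ + (1 / (2 * τ)) * sqnorm D (z₂ - (z₀ - D⁻¹.mulVec v)) - ε) :
    ∀ z : Fin d → ℝ,
      g z₁ - g z + (z₁ - z) ⬝ᵥ ((1 / τ) • v)
        ≤ (1 / (2 * τ)) * (sqnorm D (z - z₀) - sqnorm D (z - z₂))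
          + (1 / (2 * τ)) * (sqnorm D (D⁻¹.mulVec (u - v)) - sqnorm D (z₀ - z₁))
          + 2 * ε + Real.sqrt (2 * ε / τ) * mnorm D (z - z₂) := by
  intro z
  rw [mulVec_sub]
  set p := D⁻¹ *ᵥ u
  set q := D⁻¹ *ᵥ v
  have hv : D *ᵥ q = v := by
    rw [mulVec_mulVec, mul_nonsing_inv _ hD.det_pos.ne'.isUnit, one_mulVec]
  have h_type2 : g z₁ + 1 / τ * ((z₂ - z₁) ⬝ᵥ D *ᵥ (z₀ - p - z₁)) - ε ≤ g z₂ := by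
    simpa only [smul_dotProduct, smul_eq_mul, dotProduct_comm (D *ᵥ _)] using h1 z₂
  have h_growth := proxObjective_quadratic_growth hD.posSemidef hτ hε hconv h2 z
  have h_geom := mul_le_mul_of_nonneg_left (sqnorm_descent_estimate hD.posSemidef z z₀ z₁ z₂ p q)
    (by positivity : (0 : ℝ) ≤ 1 / (2 * τ))
  rw [← hv, dotProduct_smul, smul_eq_mul]
  unfold proxObjective at h_growth
  linear_combination h_type2 + h_growth + h_geom
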